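/- Let (E, F, H) be an irreducible root-of-unity sl₂ triple on a nonzero finite-dimensional complex vector space W of dimension exactly M, with q = exp(2πi n/m) for coprime positive integers n, m and M = m (m odd) or m/2 (m even). Then there exist a nonzero vector ψ ∈ W and j ∈ ℂ with Eψ = 0, Hψ = jψ, and [2j − r + 1]_q ≠ 0 for every integer r with 1 ≤ r ≤ M − 1. -/

import Mathlib

/-- `q = exp(2πi n/m)`. -/
noncomputable def qrou (n m : ℕ) : ℂ :=
  Complex.exp (2 * Real.pi * Complex.I * n / m)

/-- `q^x = exp(2πi n x/m)` for `x ∈ ℂ`. -/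
noncomputable def qpow (n m : ℕ) (x : ℂ) : ℂ :=
  Complex.exp (2 * Real.pi * Complex.I * n * x / m)

/-- The q-number `[x]_q = (q^x − q^(−x))/(q − q⁻¹)`. -/
noncomputable def qnum (n m : ℕ) (x : ℂ) : ℂ :=
  (qpow n m x - qpow n m (-x)) / (qrou n m - (qrou n m)⁻¹)

/-- `M = m` if `m` is odd, `M = m/2` if `m` is even. -/
def Mrou (m : ℕ) : ℕ := if m % 2 = 1 then m else m / 2

/-!
Since `E` raises `H`-weights by one and is nilpotent, some `E`-image of an `H`-eigenvector is a
highest-weight vector `ψ` of weight `j`. With `vᵢ = Fⁱ ψ`, the relations give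
`E vᵢ₊₁ = [i+1]_q [2j−i]_q vᵢ`, so `span {vᵢ | r ≤ i < M}` is invariant as soon as `E vᵣ = 0`.
For `r = 0` irreducibility makes `v₀, …, v_{M−1}` span `W`, hence a basis since `dim W = M`.
If `[2j−r+1]_q = 0` with `1 ≤ r ≤ M−1`, then `E vᵣ = 0` and `span {vᵣ, …, v_{M−1}}` is a
proper nonzero invariant subspace.
-/

theorem qpow_add (n m : ℕ) (x y : ℂ) : qpow n m (x + y) = qpow n m x * qpow n m y := by
  rw [qpow, qpow, qpow, ← Complex.exp_add]; ring_nf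

theorem qpow_neg (n m : ℕ) (x : ℂ) : qpow n m (-x) = (qpow n m x)⁻¹ := by
  rw [qpow, qpow, ← Complex.exp_neg]; ring_nf

theorem qpow_one (n m : ℕ) : qpow n m 1 = qrou n m := by
  rw [qpow, qrou, mul_one]

theorem qnum_zero (n m : ℕ) : qnum n m 0 = 0 := by
  rw [qnum, neg_zero, sub_self, zero_div]

theorem qnum_mul_add_qnum_sub (n m : ℕ) (x y : ℂ) :
    qnum n m x * qnum n m (y + 1) + qnum n m (y - x) = qnum n m (x + 1) * qnum n m y := by
  have hx : qpow n m x ≠ 0 := Complex.exp_ne_zero _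
  have hy : qpow n m y ≠ 0 := Complex.exp_ne_zero _
  have hq : qrou n m ≠ 0 := Complex.exp_ne_zero _
  simp only [qnum, sub_eq_add_neg y x, neg_add, qpow_add, qpow_neg, qpow_one]
  by_cases hd : qrou n m - (qrou n m)⁻¹ = 0
  · simp [hd]
  · field_simp
    ring

section WeightShift

variable {K W : Type*} [CommRing K] [AddCommGroup W] [Module K W]

theorem apply_pow_apply_eq_smul_of_commutator_eq_smul {H X : Module.End K W} {a : K}
    (hHX : H * X - X * H = a • X) {v : W} {μ : K} (hv : H v = μ • v) (i : ℕ) :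
    H ((X ^ i) v) = (μ + i * a) • (X ^ i) v := by
  have hcomm (w : W) : H (X w) = X (H w) + a • X w := by
    rw [← Module.End.mul_apply, ← Module.End.mul_apply, ← LinearMap.smul_apply, ← hHX]
    simp
  induction i with
  | zero => simpa using hv
  | succ i ih =>
    rw [pow_succ', Module.End.mul_apply, hcomm, ih, map_smul]
    push_cast
    module

theorem exists_pow_apply_ne_zero_and_apply_eq_zero {X : Module.End K W} {N : ℕ} {v : W}
    (hXv : (X ^ N) v = 0) (hv : v ≠ 0) : ∃ i, (X ^ i) v ≠ 0 ∧ X ((X ^ i) v) = 0 := by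
  induction N generalizing v with
  | zero => exact absurd hXv (by simpa using hv)
  | succ N ih =>
    by_cases h : X v = 0
    · exact ⟨0, by simpa using hv, by simpa using h⟩
    · obtain ⟨i, hi⟩ := ih (by rwa [← Module.End.mul_apply, ← pow_succ]) h
      exact ⟨i + 1, by rwa [pow_succ, Module.End.mul_apply]⟩

end WeightShift

theorem exists_highest_weight_vector {K W : Type*} [Field K] [IsAlgClosed K] [AddCommGroup W]
    [Module K W] [FiniteDimensional K W] [Nontrivial W] {E H : Module.End K W}
    (hHE : H * E - E * H = E) {N : ℕ} (hE : E ^ N = 0) :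
    ∃ ψ : W, ψ ≠ 0 ∧ ∃ j : K, E ψ = 0 ∧ H ψ = j • ψ := by
  obtain ⟨μ, hμ⟩ := H.exists_eigenvalue
  obtain ⟨v, hv⟩ := hμ.exists_hasEigenvector
  obtain ⟨i, hi, hEi⟩ :=
    exists_pow_apply_ne_zero_and_apply_eq_zero (X := E) (by rw [hE, LinearMap.zero_apply]) hv.2
  exact ⟨_, hi, μ + i * 1, hEi,
    apply_pow_apply_eq_smul_of_commutator_eq_smul (by rwa [one_smul]) hv.apply_eq_smul i⟩

section HighestWeightString

variable {W : Type*} [AddCommGroup W] [Module ℂ W] {E F H : Module.End ℂ W} {ψ : W} {j : ℂ}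

theorem apply_pow_succ_apply_of_highest_weight {n m : ℕ} (hHF : H * F - F * H = -F)
    (hEF : ∀ (v : W) (lam : ℂ), H v = lam • v → (E * F - F * E) v = qnum n m (2 * lam) • v)
    (hEψ : E ψ = 0) (hHψ : H ψ = j • ψ) (i : ℕ) :
    E ((F ^ (i + 1)) ψ) = (qnum n m (i + 1) * qnum n m (2 * j - i)) • (F ^ i) ψ := by
  have hHFψ := apply_pow_apply_eq_smul_of_commutator_eq_smul (by rwa [neg_one_smul]) hHψ
  have hEFψ (k : ℕ) :
      E ((F ^ (k + 1)) ψ) = F (E ((F ^ k) ψ)) + qnum n m (2 * (j - k)) • (F ^ k) ψ := by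
    rw [← hEF _ _ ((hHFψ k).trans (by ring_nf)), pow_succ']
    simp
  induction i with
  | zero =>
    have h := qnum_mul_add_qnum_sub n m 0 (2 * j)
    rw [qnum_zero, zero_mul, zero_add, sub_zero] at h
    rw [hEFψ, pow_zero, Module.End.one_apply, hEψ, map_zero, zero_add, Nat.cast_zero,
      sub_zero, sub_zero]
    exact congrArg (· • ψ) h
  | succ i ih =>
    rw [hEFψ, ih, map_smul, ← Module.End.mul_apply, ← pow_succ', ← add_smul]
    congr 1
    convert qnum_mul_add_qnum_sub n m (i + 1) (2 * j - (i + 1)) using 3 <;> push_cast <;> ring_nf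

variable (F ψ) in
def stringSpan (N r : ℕ) : Submodule ℂ W :=
  Submodule.span ℂ ((fun i : Fin N => (F ^ (i : ℕ)) ψ) '' {i | r ≤ (i : ℕ)})

theorem stringSpan_le_comap_of_forall {T : Module.End ℂ W} {N r : ℕ}
    (h : ∀ i : Fin N, r ≤ (i : ℕ) → T ((F ^ (i : ℕ)) ψ) ∈ stringSpan F ψ N r) :
    stringSpan F ψ N r ≤ (stringSpan F ψ N r).comap T :=
  Submodule.span_le.2 (Set.image_subset_iff.2 h)

theorem pow_apply_mem_stringSpan {N r i : ℕ} (hri : r ≤ i) (hiN : i < N) :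
    (F ^ i) ψ ∈ stringSpan F ψ N r :=
  Submodule.subset_span ⟨⟨i, hiN⟩, hri, rfl⟩

theorem stringSpan_le_comap_of_pow_apply_eq_zero {N r : ℕ} (hF : (F ^ N) ψ = 0) :
    stringSpan F ψ N r ≤ (stringSpan F ψ N r).comap F :=
  stringSpan_le_comap_of_forall fun i hi => by
    rw [← Module.End.mul_apply, ← pow_succ']
    rcases (show (i : ℕ) + 1 ≤ N from i.isLt).lt_or_eq with h | h
    · exact pow_apply_mem_stringSpan (by omega) h
    · rw [h, hF]
      exact zero_mem _

theorem stringSpan_le_comap_of_apply_eq_smul {N r : ℕ} (hHF : H * F - F * H = -F)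
    (hHψ : H ψ = j • ψ) : stringSpan F ψ N r ≤ (stringSpan F ψ N r).comap H :=
  stringSpan_le_comap_of_forall fun i hi => by
    rw [apply_pow_apply_eq_smul_of_commutator_eq_smul (by rwa [neg_one_smul]) hHψ]
    exact Submodule.smul_mem _ _ (pow_apply_mem_stringSpan hi i.isLt)

theorem stringSpan_le_comap_of_apply_pow_eq_zero {n m N r : ℕ} (hHF : H * F - F * H = -F)
    (hEF : ∀ (v : W) (lam : ℂ), H v = lam • v → (E * F - F * E) v = qnum n m (2 * lam) • v)
    (hEψ : E ψ = 0) (hHψ : H ψ = j • ψ) (hEr : E ((F ^ r) ψ) = 0) :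
    stringSpan F ψ N r ≤ (stringSpan F ψ N r).comap E :=
  stringSpan_le_comap_of_forall fun i hi => by
    rcases hi.eq_or_lt with h | h
    · rw [← h, hEr]
      exact zero_mem _
    · obtain ⟨k, hk⟩ : ∃ k, (i : ℕ) = k + 1 := ⟨i - 1, by omega⟩
      rw [hk, apply_pow_succ_apply_of_highest_weight hHF hEF hEψ hHψ]
      exact Submodule.smul_mem _ _ (pow_apply_mem_stringSpan (by omega) (by omega))

theorem linearIndependent_pow_apply_of_stringSpan_eq_top {N : ℕ} (h : stringSpan F ψ N 0 = ⊤)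
    (hN : Module.finrank ℂ W = N) : LinearIndependent ℂ (fun i : Fin N => (F ^ (i : ℕ)) ψ) := by
  refine linearIndependent_of_top_le_span_of_card_eq_finrank ?_ (by simp [hN])
  simp only [stringSpan, zero_le, Set.ofPred_true, Set.image_univ] at h
  exact h.ge

end HighestWeightString

theorem highest_weight_of_dimension_M_triple_general
    (n m : ℕ)
    (W : Type*) [AddCommGroup W] [Module ℂ W] [FiniteDimensional ℂ W] [Nontrivial W]
    (E F H : Module.End ℂ W)
    (hHE : H * E - E * H = E) (hHF : H * F - F * H = -F)
    (hEM : E ^ Mrou m = 0) (hFM : F ^ Mrou m = 0)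
    (hEF : ∀ (v : W) (lam : ℂ), H v = lam • v →
      (E * F - F * E) v = qnum n m (2 * lam) • v)
    (hirr : ∀ p : Submodule ℂ W, (∀ w ∈ p, E w ∈ p) → (∀ w ∈ p, F w ∈ p) →
      (∀ w ∈ p, H w ∈ p) → p = ⊥ ∨ p = ⊤)
    (hdim : Module.finrank ℂ W = Mrou m) :
    ∃ ψ : W, ψ ≠ 0 ∧ ∃ j : ℂ, E ψ = 0 ∧ H ψ = j • ψ ∧
      ∀ r : ℕ, 1 ≤ r → r ≤ Mrou m - 1 → qnum n m (2 * j - (r : ℂ) + 1) ≠ 0 := by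
  obtain ⟨ψ, hψ, j, hEψ, hHψ⟩ := exists_highest_weight_vector hHE hEM
  have hFψ : (F ^ Mrou m) ψ = 0 := by rw [hFM, LinearMap.zero_apply]
  have hM : 0 < Mrou m := hdim ▸ Module.finrank_pos
  have hirr_string (r : ℕ) (hEr : E ((F ^ r) ψ) = 0) :
      stringSpan F ψ (Mrou m) r = ⊥ ∨ stringSpan F ψ (Mrou m) r = ⊤ :=
    hirr _ (stringSpan_le_comap_of_apply_pow_eq_zero hHF hEF hEψ hHψ hEr)
      (stringSpan_le_comap_of_pow_apply_eq_zero hFψ) (stringSpan_le_comap_of_apply_eq_smul hHF hHψ)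
  have hli : LinearIndependent ℂ (fun i : Fin (Mrou m) => (F ^ (i : ℕ)) ψ) := by
    refine linearIndependent_pow_apply_of_stringSpan_eq_top
      ((hirr_string 0 hEψ).resolve_left fun h => hψ ?_) hdim
    simpa [h] using pow_apply_mem_stringSpan (F := F) (ψ := ψ) le_rfl hM
  refine ⟨ψ, hψ, j, hEψ, hHψ, fun r hr hrM hq => ?_⟩
  obtain ⟨k, rfl⟩ : ∃ k, r = k + 1 := ⟨r - 1, by omega⟩
  have hEr : E ((F ^ (k + 1)) ψ) = 0 := by
    rw [apply_pow_succ_apply_of_highest_weight hHF hEF hEψ hHψ,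
      show 2 * j - (k : ℂ) = 2 * j - ((k + 1 : ℕ) : ℂ) + 1 by push_cast; ring, hq, mul_zero,
      zero_smul]
  rcases hirr_string _ hEr with h | h
  · have hkM : k + 1 < Mrou m := by omega
    have hmem := pow_apply_mem_stringSpan (F := F) (ψ := ψ) le_rfl hkM
    exact hli.ne_zero ⟨k + 1, hkM⟩ ((Submodule.mem_bot ℂ).1 (h ▸ hmem))
  · exact hli.notMem_span_image (x := ⟨0, hM⟩) (by simp) (h ▸ Submodule.mem_top)

/-- An irreducible root-of-unity sl₂ triple on a space `W` of dimension
exactly `M` has a nonzero highest-weight vector `ψ` (`Eψ = 0`, `Hψ = jψ`) with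
`[2j − r + 1]_q ≠ 0` for every integer `r` with `1 ≤ r ≤ M − 1`. -/
theorem highest_weight_of_dimension_M_triple
    (n m : ℕ) (hn1 : 1 ≤ n) (hnm : n ≤ m - 1) (hcop : Nat.Coprime n m)
    (W : Type*) [AddCommGroup W] [Module ℂ W] [FiniteDimensional ℂ W] [Nontrivial W]
    (E F H : Module.End ℂ W)
    (hHE : H * E - E * H = E) (hHF : H * F - F * H = -F)
    (hEM : E ^ Mrou m = 0) (hFM : F ^ Mrou m = 0)
    (hEF : ∀ (v : W) (lam : ℂ), H v = lam • v →
      (E * F - F * E) v = qnum n m (2 * lam) • v)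
    (hirr : ∀ p : Submodule ℂ W, (∀ w ∈ p, E w ∈ p) → (∀ w ∈ p, F w ∈ p) →
      (∀ w ∈ p, H w ∈ p) → p = ⊥ ∨ p = ⊤)
    (hdim : Module.finrank ℂ W = Mrou m) :
    ∃ ψ : W, ψ ≠ 0 ∧ ∃ j : ℂ, E ψ = 0 ∧ H ψ = j • ψ ∧
      ∀ r : ℕ, 1 ≤ r → r ≤ Mrou m - 1 → qnum n m (2 * j - (r : ℂ) + 1) ≠ 0 :=
  highest_weight_of_dimension_M_triple_general n m W E F H hHE hHF hEM hFM hEF hirr hdim
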